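/- Suppose n ≥ 3, A is an arm sequence, and i, j ∈ ℤ/nℤ are distinct with j ≠ i + 1 and j ≠ i − 1. Then the operators ẽ_i and f̃_i commute with the operators ẽ_j and f̃_j on the set of A-regular partitions (with the convention that all operators send 0 to 0); for instance, ẽ_i ẽ_j λ = ẽ_j ẽ_i λ, ẽ_i f̃_j λ = f̃_j ẽ_i λ, f̃_i ẽ_j λ = ẽ_j f̃_i λ, and f̃_i f̃_j λ = f̃_j f̃_i λ for every A-regular partition λ. -/
import Mathlib


/-!  Partitions, arm sequences and the crystal operators `ẽ_i`, `f̃_i` of the paper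
"Partition models for the crystal of the basic `U_q(ŝl_n)`-module".

A partition is modelled as a function `l : ℕ → ℕ` listing the parts, with rows indexed
from `0`; the Young diagram consists of the nodes `(a, c)` (row `a`, column `c`, both
`0`-indexed) with `c < l a`.  The node `(a, c)` here corresponds to the node
`(a + 1, c + 1)` in the (1-indexed) conventions of the paper; in particular its residue
is `c - a (mod n)`, its arm length is `l a - c - 1`, and its hook length is
`l a - c + l' c - a - 1`, where `l'` is the conjugate partition. -/

attribute [local instance] Classical.propDecidable

namespace ArmCrystal

/-- `l` is a partition: weakly decreasing with some part equal to `0`. -/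
def IsPartition (l : ℕ → ℕ) : Prop := (∀ a, l (a + 1) ≤ l a) ∧ ∃ N, l N = 0

/-- The conjugate partition: `conj l c` is the number of rows `a` with `l a > c`,
i.e. the number of nodes in column `c`. -/
noncomputable def conj (l : ℕ → ℕ) (c : ℕ) : ℕ := sInf {a | l a ≤ c}

/-- `A` is an arm sequence for `n`: `t - 1 ≤ A t ≤ (n-1)t` for `t ≥ 1`, and
`A (t + u) ∈ {A t + A u, A t + A u + 1}`.  (The value `A 0` is irrelevant; in the
definition of the order on nodes it is read as `0`, via `Aext`.) -/
def IsArmSeq (n : ℕ) (A : ℕ → ℤ) : Prop :=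
  (∀ t : ℕ, 1 ≤ t → (t : ℤ) - 1 ≤ A t ∧ A t ≤ ((n : ℤ) - 1) * t) ∧
  (∀ t u : ℕ, 1 ≤ t → 1 ≤ u → A (t + u) = A t + A u ∨ A (t + u) = A t + A u + 1)

/-- `A` extended by `A 0 = 0`. -/
def Aext (A : ℕ → ℤ) (t : ℕ) : ℤ := if t = 0 then 0 else A t

/-- The `(a, c)`-hook of `l` is illegal with parameter `t ≥ 1`: `(a, c)` is a node of
`l` whose hook length is `n * t` and whose arm length is `A t`. -/
def IllegalHook (n : ℕ) (A : ℕ → ℤ) (l : ℕ → ℕ) (a c t : ℕ) : Prop :=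
  1 ≤ t ∧ c < l a ∧
  ((l a : ℤ) + conj l c = (n : ℤ) * t + a + c + 1) ∧
  ((l a : ℤ) = A t + c + 1)

/-- `l` is `A`-regular: it has no illegal hook. -/
def ARegular (n : ℕ) (A : ℕ → ℤ) (l : ℕ → ℕ) : Prop :=
  ¬ ∃ a c t, IllegalHook n A l a c t

/-- `(a, c)` is a removable node of `l`. -/
def Removable (l : ℕ → ℕ) (a c : ℕ) : Prop := l a = c + 1 ∧ l (a + 1) ≤ c

/-- `(a, c)` is an addable node of `l`. -/
def Addable (l : ℕ → ℕ) (a c : ℕ) : Prop := l a = c ∧ (a = 0 ∨ c < l (a - 1))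

/-- The residue of the node `(a, c)` (0-indexed), namely `c - a ∈ ℤ/nℤ`. -/
def res (n : ℕ) (x : ℕ × ℕ) : ZMod n := (x.2 : ZMod n) - (x.1 : ZMod n)

/-- The total order `≻` determined by the arm sequence `A` on the nodes of a fixed
residue: for distinct same-residue nodes `x = (a, c)` and `y = (b, d)`, if the axial
distance `b - a + c - d` equals `n t` with `t ≥ 0` then `x ≻ y` iff `c - d > A t`, while
if `a - b + d - c = n t` with `t ≥ 0` then `x ≻ y` iff `d - c ≤ A t` (reading `A 0 = 0`). -/
def NodeGt (n : ℕ) (A : ℕ → ℤ) (x y : ℕ × ℕ) : Prop :=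
  (∃ t : ℕ, (y.1 : ℤ) - x.1 + x.2 - y.2 = (n : ℤ) * t ∧ Aext A t < (x.2 : ℤ) - y.2) ∨
  (∃ t : ℕ, (x.1 : ℤ) - y.1 + y.2 - x.2 = (n : ℤ) * t ∧ (y.2 : ℤ) - x.2 ≤ Aext A t ∧ x ≠ y)

/-- The (finite) set of addable and removable `i`-nodes of `l`. -/
noncomputable def ARset (n : ℕ) (l : ℕ → ℕ) (i : ZMod n) : Finset (ℕ × ℕ) :=
  ((Finset.range (conj l 0 + 1)) ×ˢ (Finset.range (l 0 + 1))).filter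
    (fun x => res n x = i ∧ (Addable l x.1 x.2 ∨ Removable l x.1 x.2))

/-- The sign of a node in the ±-sequence: `+1` if addable, `-1` if removable. -/
noncomputable def sgnNode (l : ℕ → ℕ) (x : ℕ × ℕ) : ℤ :=
  if Addable l x.1 x.2 then 1 else if Removable l x.1 x.2 then -1 else 0

/-- Minus the partial sum of signs over the addable/removable `i`-nodes `y ⪰ x`
(the prefix of the ±-sequence ending at `x`, the nodes being listed in decreasing
`≻`-order). -/
noncomputable def Gnode (n : ℕ) (A : ℕ → ℤ) (l : ℕ → ℕ) (i : ZMod n) (x : ℕ × ℕ) : ℤ :=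
  -(∑ y ∈ (ARset n l i).filter (fun y => y = x ∨ NodeGt n A y x), sgnNode l y)

/-- The sum of signs over the addable/removable `i`-nodes `y ⪯ x` (the suffix of the
±-sequence starting at `x`). -/
noncomputable def Hnode (n : ℕ) (A : ℕ → ℤ) (l : ℕ → ℕ) (i : ZMod n) (x : ℕ × ℕ) : ℤ :=
  ∑ y ∈ (ARset n l i).filter (fun y => y = x ∨ NodeGt n A x y), sgnNode l y

/-- `ε_i(λ)`: the maximum of `0` and the partial sums `Gnode`. -/
noncomputable def epsP (n : ℕ) (A : ℕ → ℤ) (l : ℕ → ℕ) (i : ZMod n) : ℤ :=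
  (ARset n l i).fold max 0 (Gnode n A l i)

/-- `φ_i(λ)`: the maximum of `0` and the partial sums `Hnode`. -/
noncomputable def phiP (n : ℕ) (A : ℕ → ℤ) (l : ℕ → ℕ) (i : ZMod n) : ℤ :=
  (ARset n l i).fold max 0 (Hnode n A l i)

/-- The `i`-good node of `l`: the node in the good position of the ±-sequence, i.e. the
`≻`-greatest addable/removable `i`-node achieving `Gnode = ε_i > 0` (or `none`). -/
noncomputable def goodNode (n : ℕ) (A : ℕ → ℤ) (l : ℕ → ℕ) (i : ZMod n) : Option (ℕ × ℕ) :=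
  if hx : ∃ x ∈ ARset n l i, 0 < epsP n A l i ∧ Gnode n A l i x = epsP n A l i ∧
      ∀ y ∈ ARset n l i, NodeGt n A y x → Gnode n A l i y ≠ epsP n A l i
  then some hx.choose else none

/-- The `i`-cogood node of `l`: the node in the cogood position of the ±-sequence, i.e.
the `≻`-least addable/removable `i`-node achieving `Hnode = φ_i > 0` (or `none`). -/
noncomputable def cogoodNode (n : ℕ) (A : ℕ → ℤ) (l : ℕ → ℕ) (i : ZMod n) :
    Option (ℕ × ℕ) :=
  if hx : ∃ x ∈ ARset n l i, 0 < phiP n A l i ∧ Hnode n A l i x = phiP n A l i ∧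
      ∀ y ∈ ARset n l i, NodeGt n A x y → Hnode n A l i y ≠ phiP n A l i
  then some hx.choose else none

/-- The crystal operator `ẽ_i`: remove the `i`-good node (shorten its row by one), or
`none` (the ghost element `0`) if there is none. -/
noncomputable def et (n : ℕ) (A : ℕ → ℤ) (l : ℕ → ℕ) (i : ZMod n) : Option (ℕ → ℕ) :=
  (goodNode n A l i).map fun x => Function.update l x.1 (l x.1 - 1)

/-- The crystal operator `f̃_i`: add the `i`-cogood node (lengthen its row by one), or
`none` (the ghost element `0`) if there is none. -/
noncomputable def ft (n : ℕ) (A : ℕ → ℤ) (l : ℕ → ℕ) (i : ZMod n) : Option (ℕ → ℕ) :=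
  (cogoodNode n A l i).map fun x => Function.update l x.1 (l x.1 + 1)

section Aux

variable {n : ℕ} {A : ℕ → ℤ}

lemma Aext_zero : Aext A 0 = 0 := rfl

lemma Aext_nonneg (hA : IsArmSeq n A) (t : ℕ) : 0 ≤ Aext A t := by
  rcases Nat.eq_zero_or_pos t with rfl | ht
  · simp [Aext]
  · have h1 := (hA.1 t ht).1
    have h2 : (1 : ℤ) ≤ (t : ℤ) := by exact_mod_cast ht
    simp only [Aext, if_neg (by omega : t ≠ 0)]
    omega

lemma Aext_super (hA : IsArmSeq n A) (t u : ℕ) :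
    Aext A t + Aext A u ≤ Aext A (t + u) ∧ Aext A (t + u) ≤ Aext A t + Aext A u + 1 := by
  rcases Nat.eq_zero_or_pos t with rfl | ht
  · simp [Aext_zero]
  rcases Nat.eq_zero_or_pos u with rfl | hu
  · simp [Aext_zero]
  have h := hA.2 t u ht hu
  have e1 : Aext A t = A t := by simp only [Aext, if_neg (by omega : t ≠ 0)]
  have e2 : Aext A u = A u := by simp only [Aext, if_neg (by omega : u ≠ 0)]
  have e3 : Aext A (t + u) = A (t + u) := by simp only [Aext, if_neg (by omega : t + u ≠ 0)]
  rw [e1, e2, e3]; omega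

/-- Integer extension of `Aext` used to linearise the order `NodeGt`. -/
noncomputable def F (A : ℕ → ℤ) (t : ℤ) : ℤ :=
  if 0 ≤ t then Aext A t.toNat else -(Aext A (-t).toNat) - 1

lemma F_zero : F A 0 = 0 := by simp [F, Aext_zero]

lemma F_ofNat (t : ℕ) : F A t = Aext A t := by simp [F]

lemma F_neg (t : ℤ) (ht : t ≠ 0) : F A (-t) = -(F A t) - 1 := by
  rcases lt_or_gt_of_ne ht with h | h
  · simp only [F, if_pos (by omega : (0:ℤ) ≤ -t), if_neg (by omega : ¬ (0:ℤ) ≤ t)]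
    ring
  · simp only [F, if_neg (by omega : ¬ (0:ℤ) ≤ -t), if_pos (by omega : (0:ℤ) ≤ t), neg_neg]
    try ring

lemma F_super (hA : IsArmSeq n A) (s t : ℤ) : F A (s + t) ≤ F A s + F A t + 1 := by
  have key : ∀ s t : ℤ, 0 ≤ s → F A (s + t) ≤ F A s + F A t + 1 := by
    intro s t hs
    rcases le_or_gt 0 t with htp | htn
    · have := (Aext_super hA s.toNat t.toNat).2
      simp only [F, if_pos hs, if_pos htp, if_pos (by omega : (0:ℤ) ≤ s + t)]
      have e : (s + t).toNat = s.toNat + t.toNat := by omega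
      rw [e]; exact this
    · rcases le_or_gt 0 (s + t) with hst | hst
      · have := (Aext_super hA (s + t).toNat (-t).toNat).1
        simp only [F, if_pos hs, if_neg (by omega : ¬ (0:ℤ) ≤ t), if_pos hst]
        have e : (s + t).toNat + (-t).toNat = s.toNat := by omega
        rw [e] at this; omega
      · have := (Aext_super hA s.toNat (-(s + t)).toNat).2
        simp only [F, if_pos hs, if_neg (by omega : ¬ (0:ℤ) ≤ t),
          if_neg (by omega : ¬ (0:ℤ) ≤ s + t)]
        have e : s.toNat + (-(s + t)).toNat = (-t).toNat := by omega
        rw [e] at this; omega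
  rcases le_or_gt 0 s with hs | hs
  · exact key s t hs
  rcases le_or_gt 0 t with htp | htn
  · rw [add_comm s t, add_comm (F A s)]; exact key t s htp
  · have h1 := (Aext_super hA (-s).toNat (-t).toNat).1
    simp only [F, if_neg (by omega : ¬ (0:ℤ) ≤ s), if_neg (by omega : ¬ (0:ℤ) ≤ t),
      if_neg (by omega : ¬ (0:ℤ) ≤ s + t)]
    have e : (-s).toNat + (-t).toNat = (-(s + t)).toNat := by omega
    rw [e] at h1; omega

end Aux

section Order

variable {n : ℕ} {A : ℕ → ℤ}

lemma nodeGt_iff (hn : n ≠ 0) {x y : ℕ × ℕ} (t : ℤ)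
    (ht : (y.1 : ℤ) - x.1 + x.2 - y.2 = (n : ℤ) * t) :
    NodeGt n A x y ↔ F A t < (x.2 : ℤ) - y.2 := by
  have hn' : (n : ℤ) ≠ 0 := by exact_mod_cast hn
  constructor
  · rintro (⟨s, hs, hlt⟩ | ⟨s, hs, hle, hne⟩)
    · have hts : t = (s : ℤ) := by
        have : (n : ℤ) * t = (n : ℤ) * s := by omega
        exact mul_left_cancel₀ hn' this
      subst hts
      rwa [F_ofNat]
    · have hts : t = -(s : ℤ) := by
        have : (n : ℤ) * t = (n : ℤ) * (-(s : ℤ)) := by rw [mul_neg]; omega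
        exact mul_left_cancel₀ hn' this
      subst hts
      rcases Nat.eq_zero_or_pos s with rfl | hspos
      · simp only [Nat.cast_zero, neg_zero, F_zero]
        simp only [Nat.cast_zero, mul_zero] at hs
        simp only [Aext_zero] at hle
        rcases lt_or_eq_of_le hle with h | h
        · omega
        · exfalso; apply hne
          have h2 : x.2 = y.2 := by omega
          have h1 : x.1 = y.1 := by omega
          exact Prod.ext h1 h2
      · rw [F_neg _ (Int.natCast_ne_zero.mpr hspos.ne'), F_ofNat]
        omega
  · intro hF
    rcases le_or_gt 0 t with htp | htn
    · left
      refine ⟨t.toNat, by rw [ht]; congr 1; omega, ?_⟩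
      rwa [F, if_pos htp] at hF
    · right
      have hne : x ≠ y := by
        rintro rfl
        have h0 : (n : ℤ) * t = 0 := by omega
        rcases mul_eq_zero.mp h0 with h | h
        · exact absurd h hn'
        · omega
      refine ⟨(-t).toNat, ?_, ?_, hne⟩
      · have e : ((-t).toNat : ℤ) = -t := by omega
        rw [e, mul_neg]; omega
      · rw [F, if_neg (by omega)] at hF
        have e : ((-t).toNat : ℕ) = (-t).toNat := rfl
        omega

lemma res_dvd {x y : ℕ × ℕ} (h : res n x = res n y) :
    (n : ℤ) ∣ (y.1 : ℤ) - x.1 + x.2 - y.2 := by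
  have h' : (x.2 : ZMod n) - x.1 = (y.2 : ZMod n) - y.1 := h
  have : (((y.1 : ℤ) - x.1 + x.2 - y.2 : ℤ) : ZMod n) = 0 := by
    push_cast
    linear_combination h'
  exact (ZMod.intCast_zmod_eq_zero_iff_dvd _ n).mp this

lemma nodeGt_irrefl (hn : n ≠ 0) (x : ℕ × ℕ) : ¬ NodeGt n A x x := by
  rw [nodeGt_iff hn 0 (by ring)]
  simp [F_zero]

lemma nodeGt_trans (hn : n ≠ 0) (hA : IsArmSeq n A) {x y z : ℕ × ℕ}
    (hxy : res n x = res n y) (hyz : res n y = res n z)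
    (h1 : NodeGt n A x y) (h2 : NodeGt n A y z) : NodeGt n A x z := by
  obtain ⟨t1, ht1⟩ := res_dvd hxy
  obtain ⟨t2, ht2⟩ := res_dvd hyz
  rw [nodeGt_iff hn t1 ht1] at h1
  rw [nodeGt_iff hn t2 ht2] at h2
  rw [nodeGt_iff hn (t1 + t2) (by rw [mul_add]; omega)]
  have := F_super hA t1 t2
  omega

lemma nodeGt_total (hn : n ≠ 0) {x y : ℕ × ℕ}
    (h : res n x = res n y) (hne : x ≠ y) : NodeGt n A x y ∨ NodeGt n A y x := by
  obtain ⟨t, ht⟩ := res_dvd h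
  rw [nodeGt_iff hn t ht, nodeGt_iff hn (-t) (by rw [mul_neg]; omega)]
  rcases eq_or_ne t 0 with rfl | ht0
  · simp only [neg_zero, F_zero]
    have hxy : (x.2 : ℤ) ≠ y.2 := by
      intro h2
      apply hne
      have h1 : (x.1 : ℤ) = y.1 := by omega
      exact Prod.ext (by exact_mod_cast h1) (by exact_mod_cast h2)
    omega
  · rw [F_neg _ ht0]
    omega

end Order

section Good

variable {n : ℕ} {A : ℕ → ℤ}

lemma mem_ARset_res {l : ℕ → ℕ} {i : ZMod n} {x : ℕ × ℕ} (h : x ∈ ARset n l i) :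
    res n x = i ∧ (Addable l x.1 x.2 ∨ Removable l x.1 x.2) :=
  (Finset.mem_filter.mp h).2

lemma goodNode_spec {l : ℕ → ℕ} {i : ZMod n} {x : ℕ × ℕ} (h : goodNode n A l i = some x) :
    x ∈ ARset n l i ∧ 0 < epsP n A l i ∧ Gnode n A l i x = epsP n A l i ∧
      ∀ y ∈ ARset n l i, NodeGt n A y x → Gnode n A l i y ≠ epsP n A l i := by
  unfold goodNode at h
  split at h
  · rename_i hx
    have := hx.choose_spec
    rwa [Option.some_inj.mp h] at this
  · exact absurd h (by simp)

lemma cogoodNode_spec {l : ℕ → ℕ} {i : ZMod n} {x : ℕ × ℕ} (h : cogoodNode n A l i = some x) :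
    x ∈ ARset n l i ∧ 0 < phiP n A l i ∧ Hnode n A l i x = phiP n A l i ∧
      ∀ y ∈ ARset n l i, NodeGt n A x y → Hnode n A l i y ≠ phiP n A l i := by
  unfold cogoodNode at h
  split at h
  · rename_i hx
    have := hx.choose_spec
    rwa [Option.some_inj.mp h] at this
  · exact absurd h (by simp)

lemma not_addable_of_removable {l : ℕ → ℕ} {a c : ℕ} (h : Removable l a c) :
    ¬ Addable l a c := by
  intro h'
  have := h.1; have := h'.1
  omega

lemma good_removable (hn : n ≠ 0) (hA : IsArmSeq n A) {l : ℕ → ℕ} {i : ZMod n} {x : ℕ × ℕ}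
    (h : goodNode n A l i = some x) : Removable l x.1 x.2 := by
  obtain ⟨hmem, heps, hGx, -⟩ := goodNode_spec h
  by_contra hrem
  have hadd : Addable l x.1 x.2 := ((mem_ARset_res hmem).2).resolve_right hrem
  have hsgn : sgnNode l x = 1 := by simp [sgnNode, hadd]
  set S := ARset n l i with hS
  set T := S.filter (fun y => NodeGt n A y x) with hT
  have hres : ∀ y ∈ S, res n y = i := fun y hy => (mem_ARset_res hy).1
  have hxT : x ∉ T := by simp [hT, nodeGt_irrefl hn]
  have hsplit : S.filter (fun y => y = x ∨ NodeGt n A y x) = insert x T := by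
    ext y
    simp only [Finset.mem_filter, Finset.mem_insert, hT]
    constructor
    · rintro ⟨hy, rfl | hgt⟩
      · exact Or.inl rfl
      · exact Or.inr ⟨hy, hgt⟩
    · rintro (rfl | ⟨hy, hgt⟩)
      · exact ⟨hmem, Or.inl rfl⟩
      · exact ⟨hy, Or.inr hgt⟩
  have hGx' : Gnode n A l i x = -(sgnNode l x + ∑ y ∈ T, sgnNode l y) := by
    rw [Gnode, hsplit, Finset.sum_insert hxT]
  rcases T.eq_empty_or_nonempty with hTe | hTne
  · rw [hTe] at hGx'
    simp [hsgn] at hGx'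
    omega
  · obtain ⟨z, hzT, hzmin⟩ := Finset.exists_min_image T
      (fun y => (T.filter (fun w => NodeGt n A y w)).card) hTne
    have hzS : z ∈ S := (Finset.mem_filter.mp hzT).1
    have hzx : NodeGt n A z x := (Finset.mem_filter.mp hzT).2
    have hmin : ∀ y ∈ T, y ≠ z → NodeGt n A y z := by
      intro y hyT hyz
      have hyS : y ∈ S := (Finset.mem_filter.mp hyT).1
      rcases nodeGt_total (A := A) hn (by rw [hres y hyS, hres z hzS]) hyz with hgt | hgt
      · exact hgt
      · exfalso
        have hsub : T.filter (fun w => NodeGt n A y w) ⊆ T.filter (fun w => NodeGt n A z w) := by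
          intro w hw
          obtain ⟨hwT, hyw⟩ := Finset.mem_filter.mp hw
          have hwS : w ∈ S := (Finset.mem_filter.mp hwT).1
          exact Finset.mem_filter.mpr ⟨hwT,
            nodeGt_trans hn hA (by rw [hres z hzS, hres y hyS])
              (by rw [hres y hyS, hres w hwS]) hgt hyw⟩
        have hss : T.filter (fun w => NodeGt n A y w) ⊂ T.filter (fun w => NodeGt n A z w) :=
          (Finset.ssubset_iff_of_subset hsub).mpr
            ⟨y, Finset.mem_filter.mpr ⟨hyT, hgt⟩, by simp [nodeGt_irrefl hn]⟩
        have := Finset.card_lt_card hss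
        have := hzmin y hyT
        omega
    have hTz : S.filter (fun y => y = z ∨ NodeGt n A y z) = T := by
      ext y
      constructor
      · intro hy
        obtain ⟨hyS, h'⟩ := Finset.mem_filter.mp hy
        rcases h' with rfl | hgt
        · exact hzT
        · exact Finset.mem_filter.mpr ⟨hyS,
            nodeGt_trans hn hA (by rw [hres y hyS, hres z hzS])
              (by rw [hres z hzS, hres x hmem]) hgt hzx⟩
      · intro hyT
        have hyS : y ∈ S := (Finset.mem_filter.mp hyT).1
        rcases eq_or_ne y z with rfl | hyz
        · exact Finset.mem_filter.mpr ⟨hyS, Or.inl rfl⟩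
        · exact Finset.mem_filter.mpr ⟨hyS, Or.inr (hmin y hyT hyz)⟩
    have hGz : Gnode n A l i z = epsP n A l i + 1 := by
      rw [Gnode, hTz]
      rw [hGx, hsgn] at hGx'
      omega
    have hle : Gnode n A l i z ≤ epsP n A l i :=
      (Finset.le_fold_max _).mpr (Or.inr ⟨z, hzS, le_refl _⟩)
    omega

lemma cogood_addable (hn : n ≠ 0) (hA : IsArmSeq n A) {l : ℕ → ℕ} {i : ZMod n} {x : ℕ × ℕ}
    (h : cogoodNode n A l i = some x) : Addable l x.1 x.2 := by
  obtain ⟨hmem, hphi, hHx, -⟩ := cogoodNode_spec h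
  by_contra hadd
  have hrem : Removable l x.1 x.2 := ((mem_ARset_res hmem).2).resolve_left hadd
  have hsgn : sgnNode l x = -1 := by simp [sgnNode, hadd, hrem]
  set S := ARset n l i with hS
  set T := S.filter (fun y => NodeGt n A x y) with hT
  have hres : ∀ y ∈ S, res n y = i := fun y hy => (mem_ARset_res hy).1
  have hxT : x ∉ T := by simp [hT, nodeGt_irrefl hn]
  have hsplit : S.filter (fun y => y = x ∨ NodeGt n A x y) = insert x T := by
    ext y
    simp only [Finset.mem_filter, Finset.mem_insert, hT]
    constructor
    · rintro ⟨hy, rfl | hgt⟩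
      · exact Or.inl rfl
      · exact Or.inr ⟨hy, hgt⟩
    · rintro (rfl | ⟨hy, hgt⟩)
      · exact ⟨hmem, Or.inl rfl⟩
      · exact ⟨hy, Or.inr hgt⟩
  have hHx' : Hnode n A l i x = sgnNode l x + ∑ y ∈ T, sgnNode l y := by
    rw [Hnode, hsplit, Finset.sum_insert hxT]
  rcases T.eq_empty_or_nonempty with hTe | hTne
  · rw [hTe] at hHx'
    simp [hsgn] at hHx'
    omega
  · obtain ⟨z, hzT, hzmax⟩ := Finset.exists_max_image T
      (fun y => (T.filter (fun w => NodeGt n A y w)).card) hTne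
    have hzS : z ∈ S := (Finset.mem_filter.mp hzT).1
    have hzx : NodeGt n A x z := (Finset.mem_filter.mp hzT).2
    have hmax : ∀ y ∈ T, y ≠ z → NodeGt n A z y := by
      intro y hyT hyz
      have hyS : y ∈ S := (Finset.mem_filter.mp hyT).1
      rcases nodeGt_total (A := A) hn (by rw [hres z hzS, hres y hyS]) (Ne.symm hyz) with hgt | hgt
      · exact hgt
      · exfalso
        have hsub : T.filter (fun w => NodeGt n A z w) ⊆ T.filter (fun w => NodeGt n A y w) := by
          intro w hw
          obtain ⟨hwT, hzw⟩ := Finset.mem_filter.mp hw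
          have hwS : w ∈ S := (Finset.mem_filter.mp hwT).1
          exact Finset.mem_filter.mpr ⟨hwT,
            nodeGt_trans hn hA (by rw [hres y hyS, hres z hzS])
              (by rw [hres z hzS, hres w hwS]) hgt hzw⟩
        have hss : T.filter (fun w => NodeGt n A z w) ⊂ T.filter (fun w => NodeGt n A y w) :=
          (Finset.ssubset_iff_of_subset hsub).mpr
            ⟨z, Finset.mem_filter.mpr ⟨hzT, hgt⟩, by simp [nodeGt_irrefl hn]⟩
        have := Finset.card_lt_card hss
        have := hzmax y hyT
        omega
    have hTz : S.filter (fun y => y = z ∨ NodeGt n A z y) = T := by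
      ext y
      constructor
      · intro hy
        obtain ⟨hyS, h'⟩ := Finset.mem_filter.mp hy
        rcases h' with rfl | hgt
        · exact hzT
        · exact Finset.mem_filter.mpr ⟨hyS,
            nodeGt_trans hn hA (by rw [hres x hmem, hres z hzS])
              (by rw [hres z hzS, hres y hyS]) hzx hgt⟩
      · intro hyT
        have hyS : y ∈ S := (Finset.mem_filter.mp hyT).1
        rcases eq_or_ne y z with rfl | hyz
        · exact Finset.mem_filter.mpr ⟨hyS, Or.inl rfl⟩
        · exact Finset.mem_filter.mpr ⟨hyS, Or.inr (hmax y hyT hyz)⟩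
    have hHz : Hnode n A l i z = phiP n A l i + 1 := by
      rw [Hnode, hTz]
      rw [hHx, hsgn] at hHx'
      omega
    have hle : Hnode n A l i z ≤ phiP n A l i :=
      (Finset.le_fold_max _).mpr (Or.inr ⟨z, hzS, le_refl _⟩)
    omega

end Good

section Swap

variable {n : ℕ} {A : ℕ → ℤ}

lemma part_anti {l : ℕ → ℕ} (hl : IsPartition l) : Antitone l :=
  antitone_nat_of_succ_le hl.1

lemma conj_zero_spec {l : ℕ → ℕ} (hl : IsPartition l) :
    l (conj l 0) = 0 ∧ ∀ a, 0 < l a → a < conj l 0 := by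
  obtain ⟨N, hN⟩ := hl.2
  have hne : {a | l a ≤ 0}.Nonempty := ⟨N, by simp [hN]⟩
  have h0 : l (conj l 0) = 0 := Nat.le_zero.mp (Nat.sInf_mem hne)
  refine ⟨h0, fun a ha => ?_⟩
  by_contra hc
  have : conj l 0 ≤ a := by omega
  have := part_anti hl this
  omega

lemma node_bounds {l : ℕ → ℕ} (hl : IsPartition l) {a c : ℕ}
    (h : Addable l a c ∨ Removable l a c) : a ≤ conj l 0 ∧ c ≤ l 0 := by
  obtain ⟨h0, hlt⟩ := conj_zero_spec hl
  have hmono := part_anti hl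
  rcases h with ⟨h1, h2⟩ | ⟨h1, h2⟩
  · constructor
    · rcases Nat.eq_zero_or_pos c with rfl | hc
      · rcases h2 with rfl | h2
        · omega
        · have := hlt (a - 1) (by omega)
          omega
      · have := hlt a (by omega)
        omega
    · have := hmono (Nat.zero_le a)
      omega
  · have hc := hlt a (by omega)
    have := hmono (Nat.zero_le a)
    exact ⟨by omega, by omega⟩

lemma mem_ARset_iff {l : ℕ → ℕ} (hl : IsPartition l) {j : ZMod n} {x : ℕ × ℕ} :
    x ∈ ARset n l j ↔ res n x = j ∧ (Addable l x.1 x.2 ∨ Removable l x.1 x.2) := by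
  constructor
  · exact mem_ARset_res
  · rintro ⟨h1, h2⟩
    obtain ⟨hb1, hb2⟩ := node_bounds hl h2
    refine Finset.mem_filter.mpr ⟨Finset.mem_product.mpr ⟨?_, ?_⟩, h1, h2⟩
    · exact Finset.mem_range.mpr (by omega)
    · exact Finset.mem_range.mpr (by omega)

/-- The key residue-swap lemma: updating row `r` between values `k` and `k+1`
(the changed node having residue `i = k - r`) does not affect addability or
removability of nodes of residue `j ∉ {i-1, i, i+1}`. -/
lemma swap_lemma {l : ℕ → ℕ} {r k m : ℕ} {i j : ZMod n}
    (hvl : l r = k ∨ l r = k + 1) (hvm : m = k ∨ m = k + 1)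
    (hk : (k : ZMod n) - (r : ZMod n) = i)
    (hji : j ≠ i) (hjp : j ≠ i + 1) (hjm : j ≠ i - 1)
    (a c : ℕ) (hres : (c : ZMod n) - (a : ZMod n) = j) :
    (Addable (Function.update l r m) a c ↔ Addable l a c) ∧
    (Removable (Function.update l r m) a c ↔ Removable l a c) := by
  rcases eq_or_ne a r with rfl | har
  · -- changed row: all four conditions fail
    have hc1 : c ≠ k := by
      rintro rfl
      exact hji (hres.symm.trans hk)
    have hc2 : c ≠ k + 1 := by
      rintro rfl
      apply hjp
      rw [← hres, ← hk]
      push_cast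
      ring
    have hc3 : c + 1 ≠ k := by
      intro hck
      apply hjm
      rw [← hres, ← hk]
      have : (k : ZMod n) = (c : ZMod n) + 1 := by
        rw [← hck]; push_cast; ring
      rw [this]
      ring
    constructor
    · constructor
      · intro h
        have := h.1
        rw [Function.update_self] at this
        omega
      · intro h
        have := h.1
        omega
    · constructor
      · intro h
        have := h.1
        rw [Function.update_self] at this
        omega
      · intro h
        have := h.1
        omega
  rcases eq_or_ne a (r + 1) with rfl | har1
  · -- row below the changed row
    have hck : c ≠ k := by
      rintro rfl
      apply hjm
      rw [← hres, ← hk]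
      push_cast
      ring
    constructor
    · unfold Addable
      rw [Function.update_of_ne har, show r + 1 - 1 = r from rfl, Function.update_self]
      constructor
      · rintro ⟨h1, h2⟩
        refine ⟨h1, ?_⟩
        rcases h2 with h2 | h2
        · omega
        · right; omega
      · rintro ⟨h1, h2⟩
        refine ⟨h1, ?_⟩
        rcases h2 with h2 | h2
        · omega
        · right; omega
    · unfold Removable
      rw [Function.update_of_ne har, Function.update_of_ne (by omega : r + 1 + 1 ≠ r)]
  · -- rows not adjacent from below
    have hang : a - 1 ≠ r := by
      rcases Nat.eq_zero_or_pos a with rfl | ha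
      · simpa using har
      · omega
    constructor
    · unfold Addable
      rw [Function.update_of_ne har, Function.update_of_ne hang]
    · unfold Removable
      rw [Function.update_of_ne har]
      rcases eq_or_ne (a + 1) r with hr | hr
      · -- row above the changed row
        have hck : c ≠ k := by
          rintro rfl
          apply hjp
          rw [← hres, ← hk]
          have : (r : ZMod n) = (a : ZMod n) + 1 := by rw [← hr]; push_cast; ring
          rw [this]
          ring
        rw [hr, Function.update_self]
        constructor
        · rintro ⟨h1, h2⟩
          exact ⟨h1, by omega⟩
        · rintro ⟨h1, h2⟩
          exact ⟨h1, by omega⟩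
      · rw [Function.update_of_ne hr]

end Swap

section Step

variable {n : ℕ} {A : ℕ → ℤ}

lemma step_partition {l : ℕ → ℕ} (hl : IsPartition l) {r k m : ℕ}
    (hcase : (Removable l r k ∧ m = k) ∨ (Addable l r k ∧ m = k + 1)) :
    IsPartition (Function.update l r m) := by
  have hmono := hl.1
  obtain ⟨N, hN⟩ := hl.2
  rcases hcase with ⟨⟨h1, h2⟩, rfl⟩ | ⟨⟨h1, h2⟩, rfl⟩
  · constructor
    · intro a
      rcases eq_or_ne a r with rfl | har
      · rw [Function.update_self, Function.update_of_ne (by omega : a + 1 ≠ a)]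
        exact h2
      · rw [Function.update_of_ne har]
        rcases eq_or_ne (a + 1) r with hr | hr
        · subst hr
          rw [Function.update_self]
          have := hmono a
          omega
        · rw [Function.update_of_ne hr]
          exact hmono a
    · refine ⟨N, ?_⟩
      rw [Function.update_of_ne (by rintro rfl; omega : N ≠ r)]
      exact hN
  · constructor
    · intro a
      rcases eq_or_ne a r with rfl | har
      · rw [Function.update_self, Function.update_of_ne (by omega : a + 1 ≠ a)]
        have := hmono a
        omega
      · rw [Function.update_of_ne har]
        rcases eq_or_ne (a + 1) r with hr | hr
        · subst hr
          rw [Function.update_self]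
          rcases h2 with h2 | h2
          · omega
          · have ha : a + 1 - 1 = a := by omega
            rw [ha] at h2
            omega
        · rw [Function.update_of_ne hr]
          exact hmono a
    · refine ⟨max N (r + 1), ?_⟩
      rw [Function.update_of_ne (by omega : max N (r + 1) ≠ r)]
      have := part_anti hl (le_max_left N (r + 1))
      omega

lemma step_congr {l : ℕ → ℕ} (hl : IsPartition l) {r k m : ℕ} {i j : ZMod n}
    (hk : (k : ZMod n) - (r : ZMod n) = i)
    (hji : j ≠ i) (hjp : j ≠ i + 1) (hjm : j ≠ i - 1)
    (hcase : (Removable l r k ∧ m = k) ∨ (Addable l r k ∧ m = k + 1)) :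
    goodNode n A (Function.update l r m) j = goodNode n A l j ∧
    cogoodNode n A (Function.update l r m) j = cogoodNode n A l j := by
  set l' := Function.update l r m with hl'def
  have hl' : IsPartition l' := step_partition hl hcase
  have hvl : l r = k ∨ l r = k + 1 := by
    rcases hcase with ⟨⟨h1, -⟩, -⟩ | ⟨⟨h1, -⟩, -⟩
    · right; exact h1
    · left; exact h1
  have hvm : m = k ∨ m = k + 1 := by
    rcases hcase with ⟨-, h⟩ | ⟨-, h⟩
    · left; exact h
    · right; exact h
  have hsw := swap_lemma (l := l) hvl hvm hk hji hjp hjm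
  have hAR : ARset n l' j = ARset n l j := by
    ext x
    rw [mem_ARset_iff hl', mem_ARset_iff hl]
    constructor
    · rintro ⟨h1, h2⟩
      refine ⟨h1, ?_⟩
      rcases h2 with h2 | h2
      · exact Or.inl (((hsw x.1 x.2 h1).1).mp h2)
      · exact Or.inr (((hsw x.1 x.2 h1).2).mp h2)
    · rintro ⟨h1, h2⟩
      refine ⟨h1, ?_⟩
      rcases h2 with h2 | h2
      · exact Or.inl (((hsw x.1 x.2 h1).1).mpr h2)
      · exact Or.inr (((hsw x.1 x.2 h1).2).mpr h2)
  have hsgn : ∀ y ∈ ARset n l j, sgnNode l' y = sgnNode l y := by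
    intro y hy
    have hres : res n y = j := (mem_ARset_res hy).1
    obtain ⟨ha, hr⟩ := hsw y.1 y.2 hres
    unfold sgnNode
    by_cases h : Addable l y.1 y.2
    · rw [if_pos h, if_pos (ha.mpr h)]
    · rw [if_neg h, if_neg (fun h' => h (ha.mp h'))]
      by_cases h2 : Removable l y.1 y.2
      · rw [if_pos h2, if_pos (hr.mpr h2)]
      · rw [if_neg h2, if_neg (fun h' => h2 (hr.mp h'))]
  have hG : Gnode n A l' j = Gnode n A l j := by
    funext x
    unfold Gnode
    rw [hAR]
    congr 1
    exact Finset.sum_congr rfl fun y hy => hsgn y (Finset.mem_filter.mp hy).1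
  have hH : Hnode n A l' j = Hnode n A l j := by
    funext x
    unfold Hnode
    rw [hAR]
    exact Finset.sum_congr rfl fun y hy => hsgn y (Finset.mem_filter.mp hy).1
  have hE : epsP n A l' j = epsP n A l j := by
    unfold epsP
    rw [hAR, hG]
  have hP : phiP n A l' j = phiP n A l j := by
    unfold phiP
    rw [hAR, hH]
  constructor
  · unfold goodNode
    rw [hAR, hG, hE]
  · unfold cogoodNode
    rw [hAR, hH, hP]

end Step

section Main

variable {n : ℕ} {A : ℕ → ℤ}

lemma et_step (hn : n ≠ 0) (hA : IsArmSeq n A) {l : ℕ → ℕ} (hl : IsPartition l)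
    {i j : ZMod n} {x : ℕ × ℕ} (h : goodNode n A l i = some x)
    (hji : j ≠ i) (hjp : j ≠ i + 1) (hjm : j ≠ i - 1) :
    goodNode n A (Function.update l x.1 (l x.1 - 1)) j = goodNode n A l j ∧
    cogoodNode n A (Function.update l x.1 (l x.1 - 1)) j = cogoodNode n A l j := by
  have hrem := good_removable hn hA h
  have hres : res n x = i := (mem_ARset_res (goodNode_spec h).1).1
  have hm : l x.1 - 1 = x.2 := by have := hrem.1; omega
  exact step_congr hl (hres : (x.2 : ZMod n) - (x.1 : ZMod n) = i) hji hjp hjm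
    (Or.inl ⟨hrem, hm⟩)

lemma ft_step (hn : n ≠ 0) (hA : IsArmSeq n A) {l : ℕ → ℕ} (hl : IsPartition l)
    {i j : ZMod n} {x : ℕ × ℕ} (h : cogoodNode n A l i = some x)
    (hji : j ≠ i) (hjp : j ≠ i + 1) (hjm : j ≠ i - 1) :
    goodNode n A (Function.update l x.1 (l x.1 + 1)) j = goodNode n A l j ∧
    cogoodNode n A (Function.update l x.1 (l x.1 + 1)) j = cogoodNode n A l j := by
  have hadd := cogood_addable hn hA h
  have hres : res n x = i := (mem_ARset_res (cogoodNode_spec h).1).1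
  have hm : l x.1 + 1 = x.2 + 1 := by have := hadd.1; omega
  exact step_congr hl (hres : (x.2 : ZMod n) - (x.1 : ZMod n) = i) hji hjp hjm
    (Or.inr ⟨hadd, hm⟩)

end Main


/-- Proposition 5.5 of the paper: if `j ≠ i, i ± 1` then the operators `ẽ_i, f̃_i`
commute with `ẽ_j, f̃_j` on `A`-regular partitions (with the convention that the
operators send the ghost element `0` to `0`, realised here by `Option.bind`). -/
theorem distant_operators_commute (n : ℕ) (hn : 3 ≤ n)
    (A : ℕ → ℤ) (hA : IsArmSeq n A) (i j : ZMod n)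
    (hij : i ≠ j) (h1 : j ≠ i + 1) (h2 : j ≠ i - 1)
    (l : ℕ → ℕ) (hl : IsPartition l) (hreg : ARegular n A l) :
    ((et n A l j).bind (fun l' => et n A l' i) =
      (et n A l i).bind (fun l' => et n A l' j)) ∧
    ((ft n A l j).bind (fun l' => et n A l' i) =
      (et n A l i).bind (fun l' => ft n A l' j)) ∧
    ((et n A l j).bind (fun l' => ft n A l' i) =
      (ft n A l i).bind (fun l' => et n A l' j)) ∧
    ((ft n A l j).bind (fun l' => ft n A l' i) =
      (ft n A l i).bind (fun l' => ft n A l' j)) := by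
  have hn0 : n ≠ 0 := by omega
  have hji : j ≠ i := Ne.symm hij
  have hip : i ≠ j + 1 := fun h => h2 (by rw [h]; ring)
  have him : i ≠ j - 1 := fun h => h1 (by rw [h]; ring)
  refine ⟨?_, ?_, ?_, ?_⟩
  · -- e e
    cases hgi : goodNode n A l i with
    | none =>
      cases hgj : goodNode n A l j with
      | none => simp [et, hgi, hgj]
      | some y => simp [et, hgi, hgj, (et_step hn0 hA hl hgj hij hip him).1]
    | some x =>
      cases hgj : goodNode n A l j with
      | none => simp [et, hgi, hgj, (et_step hn0 hA hl hgi hji h1 h2).1]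
      | some y =>
        have hxr := good_removable hn0 hA hgi
        have hyr := good_removable hn0 hA hgj
        have hresx : res n x = i := (mem_ARset_res (goodNode_spec hgi).1).1
        have hresy : res n y = j := (mem_ARset_res (goodNode_spec hgj).1).1
        have hxy : x.1 ≠ y.1 := by
          intro he
          have e1 := hxr.1
          have e2 := hyr.1
          rw [he] at e1
          apply hij
          rw [← hresx, ← hresy]
          show (x.2 : ZMod n) - x.1 = (y.2 : ZMod n) - y.1
          rw [he, show x.2 = y.2 by omega]
        simp only [et, hgi, hgj, Option.map_some, Option.bind_some,
          (et_step hn0 hA hl hgj hij hip him).1, (et_step hn0 hA hl hgi hji h1 h2).1,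
          Function.update_of_ne hxy, Function.update_of_ne (Ne.symm hxy)]
        rw [Function.update_comm (Ne.symm hxy)]
  · -- LHS: f_j then e_i ; RHS: e_i then f_j
    cases hgi : goodNode n A l i with
    | none =>
      cases hgj : cogoodNode n A l j with
      | none => simp [et, ft, hgi, hgj]
      | some y => simp [et, ft, hgi, hgj, (ft_step hn0 hA hl hgj hij hip him).1]
    | some x =>
      cases hgj : cogoodNode n A l j with
      | none => simp [et, ft, hgi, hgj, (et_step hn0 hA hl hgi hji h1 h2).2]
      | some y =>
        have hxr := good_removable hn0 hA hgi
        have hya := cogood_addable hn0 hA hgj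
        have hresx : res n x = i := (mem_ARset_res (goodNode_spec hgi).1).1
        have hresy : res n y = j := (mem_ARset_res (cogoodNode_spec hgj).1).1
        have hxy : x.1 ≠ y.1 := by
          intro he
          have e1 := hxr.1
          have e2 := hya.1
          rw [he] at e1
          apply h1
          rw [← hresy, ← hresx]
          show (y.2 : ZMod n) - y.1 = (x.2 : ZMod n) - x.1 + 1
          rw [he, show y.2 = x.2 + 1 by omega]
          push_cast
          ring
        simp only [et, ft, hgi, hgj, Option.map_some, Option.bind_some,
          (ft_step hn0 hA hl hgj hij hip him).1, (et_step hn0 hA hl hgi hji h1 h2).2,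
          Function.update_of_ne hxy, Function.update_of_ne (Ne.symm hxy)]
        rw [Function.update_comm (Ne.symm hxy)]
  · -- LHS: e_j then f_i ; RHS: f_i then e_j
    cases hgi : cogoodNode n A l i with
    | none =>
      cases hgj : goodNode n A l j with
      | none => simp [et, ft, hgi, hgj]
      | some y => simp [et, ft, hgi, hgj, (et_step hn0 hA hl hgj hij hip him).2]
    | some x =>
      cases hgj : goodNode n A l j with
      | none => simp [et, ft, hgi, hgj, (ft_step hn0 hA hl hgi hji h1 h2).1]
      | some y =>
        have hxa := cogood_addable hn0 hA hgi
        have hyr := good_removable hn0 hA hgj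
        have hresx : res n x = i := (mem_ARset_res (cogoodNode_spec hgi).1).1
        have hresy : res n y = j := (mem_ARset_res (goodNode_spec hgj).1).1
        have hxy : x.1 ≠ y.1 := by
          intro he
          have e1 := hxa.1
          have e2 := hyr.1
          rw [he] at e1
          apply h2
          rw [← hresy, ← hresx]
          show (y.2 : ZMod n) - y.1 = (x.2 : ZMod n) - x.1 - 1
          rw [he, show x.2 = y.2 + 1 by omega]
          push_cast
          ring
        simp only [et, ft, hgi, hgj, Option.map_some, Option.bind_some,
          (et_step hn0 hA hl hgj hij hip him).2, (ft_step hn0 hA hl hgi hji h1 h2).1,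
          Function.update_of_ne hxy, Function.update_of_ne (Ne.symm hxy)]
        rw [Function.update_comm (Ne.symm hxy)]
  · -- f f
    cases hgi : cogoodNode n A l i with
    | none =>
      cases hgj : cogoodNode n A l j with
      | none => simp [ft, hgi, hgj]
      | some y => simp [ft, hgi, hgj, (ft_step hn0 hA hl hgj hij hip him).2]
    | some x =>
      cases hgj : cogoodNode n A l j with
      | none => simp [ft, hgi, hgj, (ft_step hn0 hA hl hgi hji h1 h2).2]
      | some y =>
        have hxa := cogood_addable hn0 hA hgi
        have hya := cogood_addable hn0 hA hgj
        have hresx : res n x = i := (mem_ARset_res (cogoodNode_spec hgi).1).1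
        have hresy : res n y = j := (mem_ARset_res (cogoodNode_spec hgj).1).1
        have hxy : x.1 ≠ y.1 := by
          intro he
          have e1 := hxa.1
          have e2 := hya.1
          rw [he] at e1
          apply hij
          rw [← hresx, ← hresy]
          show (x.2 : ZMod n) - x.1 = (y.2 : ZMod n) - y.1
          rw [he, show x.2 = y.2 by omega]
        simp only [et, ft, hgi, hgj, Option.map_some, Option.bind_some,
          (ft_step hn0 hA hl hgj hij hip him).2, (ft_step hn0 hA hl hgi hji h1 h2).2,
          Function.update_of_ne hxy, Function.update_of_ne (Ne.symm hxy)]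
        rw [Function.update_comm (Ne.symm hxy)]

end ArmCrystal
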